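/- Consider the cascade of two discrete-time systems, each of the form x^{(ℓ)}_{k+1} = A_ℓ x^{(ℓ)}_k + B_ℓ u^{(ℓ)}_k, y^{(ℓ)}_k = σ(C_ℓ x^{(ℓ)}_k + D_ℓ u^{(ℓ)}_k) + F_ℓ u^{(ℓ)}_k, where u^{(2)}_k = y^{(1)}_k, each A_ℓ satisfies ‖A_ℓ‖ ≤ ρ_ℓ < 1, and σ is L-Lipschitz. Then for any two initial-state pairs and any two input sequences (u_k), (v_k), the difference of the outputs of the cascade satisfies a bound of the form ‖y_k - y'_k‖ ≤ β(‖x_0 - x'_0‖, k) + γ(sup_j ‖u_j - v_j‖), where β(r,k) → 0 as k → ∞ for each fixed r and γ is a class-K function (linear suffices). -/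
import Mathlib


theorem stmt_11 {X₁ X₂ U Y₁ Y₂ : Type*}
    [NormedAddCommGroup X₁] [NormedSpace ℝ X₁]
    [NormedAddCommGroup X₂] [NormedSpace ℝ X₂]
    [NormedAddCommGroup U] [NormedSpace ℝ U]
    [NormedAddCommGroup Y₁] [NormedSpace ℝ Y₁]
    [NormedAddCommGroup Y₂] [NormedSpace ℝ Y₂]
    (A₁ : X₁ →L[ℝ] X₁) (B₁ : U →L[ℝ] X₁) (C₁ : X₁ →L[ℝ] Y₁) (D₁ : U →L[ℝ] Y₁)
    (F₁ : U →L[ℝ] Y₁)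
    (A₂ : X₂ →L[ℝ] X₂) (B₂ : Y₁ →L[ℝ] X₂) (C₂ : X₂ →L[ℝ] Y₂) (D₂ : Y₁ →L[ℝ] Y₂)
    (F₂ : Y₁ →L[ℝ] Y₂)
    (ρ₁ ρ₂ : ℝ) (hA₁ : ‖A₁‖ ≤ ρ₁) (hρ₁ : ρ₁ < 1) (hA₂ : ‖A₂‖ ≤ ρ₂) (hρ₂ : ρ₂ < 1)
    (L : NNReal) (σ₁ : Y₁ → Y₁) (σ₂ : Y₂ → Y₂)
    (hσ₁ : LipschitzWith L σ₁) (hσ₂ : LipschitzWith L σ₂) :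
    ∃ (β : ℝ → ℕ → ℝ) (c : ℝ), 0 ≤ c ∧
      (∀ r, Filter.Tendsto (β r) Filter.atTop (nhds 0)) ∧
      ∀ (u v : ℕ → U) (x₁ x₁' : ℕ → X₁) (x₂ x₂' : ℕ → X₂)
        (y₁ y₁' : ℕ → Y₁) (y y' : ℕ → Y₂),
        (∀ k, x₁ (k + 1) = A₁ (x₁ k) + B₁ (u k)) →
        (∀ k, y₁ k = σ₁ (C₁ (x₁ k) + D₁ (u k)) + F₁ (u k)) →
        (∀ k, x₂ (k + 1) = A₂ (x₂ k) + B₂ (y₁ k)) →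
        (∀ k, y k = σ₂ (C₂ (x₂ k) + D₂ (y₁ k)) + F₂ (y₁ k)) →
        (∀ k, x₁' (k + 1) = A₁ (x₁' k) + B₁ (v k)) →
        (∀ k, y₁' k = σ₁ (C₁ (x₁' k) + D₁ (v k)) + F₁ (v k)) →
        (∀ k, x₂' (k + 1) = A₂ (x₂' k) + B₂ (y₁' k)) →
        (∀ k, y' k = σ₂ (C₂ (x₂' k) + D₂ (y₁' k)) + F₂ (y₁' k)) →
        ∀ M, 0 ≤ M → (∀ j, ‖u j - v j‖ ≤ M) →
        ∀ k, ‖y k - y' k‖ ≤ β (‖x₁ 0 - x₁' 0‖ + ‖x₂ 0 - x₂' 0‖) k + c * M := by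
  -- a common contraction rate
  set μ : ℝ := max (max ρ₁ ρ₂) (1/2) with hμdef
  have hμ0 : (0:ℝ) < μ := lt_of_lt_of_le (by norm_num) (le_max_right _ _)
  have hμ1 : μ < 1 := by
    apply max_lt (max_lt hρ₁ hρ₂) (by norm_num)
  have hA₁μ : ‖A₁‖ ≤ μ := hA₁.trans ((le_max_left _ _).trans (le_max_left _ _))
  have hA₂μ : ‖A₂‖ ≤ μ := hA₂.trans ((le_max_right _ _).trans (le_max_left _ _))
  set l : ℝ := (L : ℝ) with hl
  have hl0 : (0:ℝ) ≤ l := L.coe_nonneg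
  have h1μ : (0:ℝ) < 1 - μ := by linarith
  -- constants
  set S₁ : ℝ := ‖B₁‖ / (1 - μ) with hS₁def
  set A' : ℝ := l * ‖C₁‖ with hA'def
  set Cc : ℝ := l * ‖C₁‖ * S₁ + l * ‖D₁‖ + ‖F₁‖ with hCcdef
  set Q : ℝ := ‖B₂‖ * A' / μ with hQdef
  set S₂ : ℝ := ‖B₂‖ * Cc / (1 - μ) with hS₂def
  set K : ℝ := l * ‖C₂‖ * (1 + Q) + (l * ‖D₂‖ + ‖F₂‖) * A' with hKdef
  set c : ℝ := l * ‖C₂‖ * S₂ + (l * ‖D₂‖ + ‖F₂‖) * Cc with hcdef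
  have hS₁0 : 0 ≤ S₁ := div_nonneg (norm_nonneg _) h1μ.le
  have hA'0 : 0 ≤ A' := mul_nonneg hl0 (norm_nonneg _)
  have hCc0 : 0 ≤ Cc := by
    have := mul_nonneg (mul_nonneg hl0 (norm_nonneg C₁)) hS₁0
    have := mul_nonneg hl0 (norm_nonneg D₁)
    have := norm_nonneg F₁
    simp only [hCcdef]; positivity
  have hQ0 : 0 ≤ Q := div_nonneg (mul_nonneg (norm_nonneg _) hA'0) hμ0.le
  have hS₂0 : 0 ≤ S₂ := div_nonneg (mul_nonneg (norm_nonneg _) hCc0) h1μ.le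
  have hc0 : 0 ≤ c := by
    have h1 : 0 ≤ l * ‖C₂‖ * S₂ := mul_nonneg (mul_nonneg hl0 (norm_nonneg _)) hS₂0
    have h2 : 0 ≤ (l * ‖D₂‖ + ‖F₂‖) * Cc :=
      mul_nonneg (by positivity) hCc0
    linarith
  have hK0 : 0 ≤ K := by
    have h1 : 0 ≤ l * ‖C₂‖ * (1 + Q) := mul_nonneg (by positivity) (by linarith)
    have h2 : 0 ≤ (l * ‖D₂‖ + ‖F₂‖) * A' := mul_nonneg (by positivity) hA'0
    linarith
  clear_value μ S₁ A' Cc Q S₂ K c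
  refine ⟨fun r k => K * ((k : ℝ) + 1) * μ ^ k * r, c, hc0, ?_, ?_⟩
  · -- tendsto 0
    intro r
    have h1 : Filter.Tendsto (fun n : ℕ => (n : ℝ) * μ ^ n) Filter.atTop (nhds 0) :=
      tendsto_self_mul_const_pow_of_lt_one hμ0.le hμ1
    have h2 : Filter.Tendsto (fun n : ℕ => μ ^ n) Filter.atTop (nhds 0) :=
      tendsto_pow_atTop_nhds_zero_of_lt_one hμ0.le hμ1
    have h3 : Filter.Tendsto (fun n : ℕ => (K * r) * ((n : ℝ) * μ ^ n + μ ^ n))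
        Filter.atTop (nhds ((K * r) * (0 + 0))) := (h1.add h2).const_mul _
    simpa only [add_zero, mul_zero] using h3.congr (fun n => by ring)
  · intro u v x₁ x₁' x₂ x₂' y₁ y₁' y y' hx₁ hy₁ hx₂ hy hx₁' hy₁' hx₂' hy' M hM hMuv k
    set r : ℝ := ‖x₁ 0 - x₁' 0‖ + ‖x₂ 0 - x₂' 0‖ with hrdef
    have hr0 : 0 ≤ r := add_nonneg (norm_nonneg _) (norm_nonneg _)
    -- first state bound
    have He1 : ∀ k, ‖x₁ k - x₁' k‖ ≤ μ ^ k * r + S₁ * M := by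
      intro k
      induction k with
      | zero =>
        have : ‖x₁ 0 - x₁' 0‖ ≤ r := by rw [hrdef]; exact le_add_of_nonneg_right (norm_nonneg _)
        have hSM : 0 ≤ S₁ * M := mul_nonneg hS₁0 hM
        simpa using this.trans (by linarith)
      | succ k ih =>
        have hdiff : x₁ (k + 1) - x₁' (k + 1)
            = A₁ (x₁ k - x₁' k) + B₁ (u k - v k) := by
          rw [hx₁ k, hx₁' k, map_sub, map_sub]; abel
        have hb : ‖x₁ (k + 1) - x₁' (k + 1)‖
            ≤ μ * ‖x₁ k - x₁' k‖ + ‖B₁‖ * M := by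
          rw [hdiff]
          refine (norm_add_le _ _).trans (add_le_add ?_ ?_)
          · exact (A₁.le_opNorm _).trans (mul_le_mul_of_nonneg_right hA₁μ (norm_nonneg _))
          · exact (B₁.le_opNorm _).trans
              (mul_le_mul_of_nonneg_left (hMuv k) (norm_nonneg _))
        have hSeq : (1 - μ) * S₁ = ‖B₁‖ := by
          rw [hS₁def, mul_comm, div_mul_cancel₀ _ (ne_of_gt h1μ)]
        have hmul := mul_le_mul_of_nonneg_left ih hμ0.le
        calc ‖x₁ (k + 1) - x₁' (k + 1)‖
            ≤ μ * (μ ^ k * r + S₁ * M) + ‖B₁‖ * M := by linarith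
          _ = μ ^ (k + 1) * r + S₁ * M := by
              rw [← hSeq]; ring
    -- first output bound
    have Hd1 : ∀ k, ‖y₁ k - y₁' k‖ ≤ A' * (μ ^ k * r) + Cc * M := by
      intro k
      have hdiff : y₁ k - y₁' k
          = (σ₁ (C₁ (x₁ k) + D₁ (u k)) - σ₁ (C₁ (x₁' k) + D₁ (v k))) + F₁ (u k - v k) := by
        rw [hy₁ k, hy₁' k, map_sub]; abel
      have hlip : ‖σ₁ (C₁ (x₁ k) + D₁ (u k)) - σ₁ (C₁ (x₁' k) + D₁ (v k))‖
          ≤ l * ‖C₁ (x₁ k) + D₁ (u k) - (C₁ (x₁' k) + D₁ (v k))‖ := by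
        have := hσ₁.dist_le_mul (C₁ (x₁ k) + D₁ (u k)) (C₁ (x₁' k) + D₁ (v k))
        rwa [dist_eq_norm, dist_eq_norm] at this
      have harg : C₁ (x₁ k) + D₁ (u k) - (C₁ (x₁' k) + D₁ (v k))
          = C₁ (x₁ k - x₁' k) + D₁ (u k - v k) := by
        rw [map_sub, map_sub]; abel
      have hargle : ‖C₁ (x₁ k) + D₁ (u k) - (C₁ (x₁' k) + D₁ (v k))‖
          ≤ ‖C₁‖ * ‖x₁ k - x₁' k‖ + ‖D₁‖ * M := by
        rw [harg]
        refine (norm_add_le _ _).trans (add_le_add (C₁.le_opNorm _) ?_)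
        exact (D₁.le_opNorm _).trans (mul_le_mul_of_nonneg_left (hMuv k) (norm_nonneg _))
      have hF : ‖F₁ (u k - v k)‖ ≤ ‖F₁‖ * M :=
        (F₁.le_opNorm _).trans (mul_le_mul_of_nonneg_left (hMuv k) (norm_nonneg _))
      have he := He1 k
      have h1 : ‖y₁ k - y₁' k‖ ≤ l * (‖C₁‖ * ‖x₁ k - x₁' k‖ + ‖D₁‖ * M) + ‖F₁‖ * M := by
        rw [hdiff]
        refine (norm_add_le _ _).trans (add_le_add (hlip.trans ?_) hF)
        exact mul_le_mul_of_nonneg_left hargle hl0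
      have hlc : 0 ≤ l * ‖C₁‖ := mul_nonneg hl0 (norm_nonneg _)
      have hmul := mul_le_mul_of_nonneg_left he hlc
      calc ‖y₁ k - y₁' k‖
          ≤ l * (‖C₁‖ * ‖x₁ k - x₁' k‖ + ‖D₁‖ * M) + ‖F₁‖ * M := h1
        _ = l * ‖C₁‖ * ‖x₁ k - x₁' k‖ + (l * ‖D₁‖ + ‖F₁‖) * M := by ring
        _ ≤ l * ‖C₁‖ * (μ ^ k * r + S₁ * M) + (l * ‖D₁‖ + ‖F₁‖) * M := by linarith
        _ = A' * (μ ^ k * r) + Cc * M := by rw [hA'def, hCcdef]; ring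
    -- second state bound
    have He2 : ∀ k, ‖x₂ k - x₂' k‖
        ≤ μ ^ k * r + Q * ((k : ℝ) * μ ^ k) * r + S₂ * M := by
      intro k
      induction k with
      | zero =>
        have h0 : ‖x₂ 0 - x₂' 0‖ ≤ r := by rw [hrdef]; exact le_add_of_nonneg_left (norm_nonneg _)
        have hSM : 0 ≤ S₂ * M := mul_nonneg hS₂0 hM
        simpa using h0.trans (by linarith)
      | succ k ih =>
        have hdiff : x₂ (k + 1) - x₂' (k + 1)
            = A₂ (x₂ k - x₂' k) + B₂ (y₁ k - y₁' k) := by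
          rw [hx₂ k, hx₂' k, map_sub, map_sub]; abel
        have hb : ‖x₂ (k + 1) - x₂' (k + 1)‖
            ≤ μ * ‖x₂ k - x₂' k‖ + ‖B₂‖ * ‖y₁ k - y₁' k‖ := by
          rw [hdiff]
          refine (norm_add_le _ _).trans (add_le_add ?_ (B₂.le_opNorm _))
          exact (A₂.le_opNorm _).trans (mul_le_mul_of_nonneg_right hA₂μ (norm_nonneg _))
        have hQμ : ‖B₂‖ * A' = Q * μ := by
          rw [hQdef, div_mul_cancel₀ _ (ne_of_gt hμ0)]
        have hSeq : ‖B₂‖ * Cc = (1 - μ) * S₂ := by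
          rw [hS₂def, mul_comm (1 - μ), div_mul_cancel₀ _ (ne_of_gt h1μ)]
        have hmul1 := mul_le_mul_of_nonneg_left ih hμ0.le
        have hmul2 := mul_le_mul_of_nonneg_left (Hd1 k) (norm_nonneg B₂)
        calc ‖x₂ (k + 1) - x₂' (k + 1)‖
            ≤ μ * (μ ^ k * r + Q * ((k : ℝ) * μ ^ k) * r + S₂ * M)
              + ‖B₂‖ * (A' * (μ ^ k * r) + Cc * M) := by linarith
          _ = μ ^ (k + 1) * r + Q * (((k : ℝ) + 1) * μ ^ (k + 1)) * r + S₂ * M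
              + (‖B₂‖ * A' - Q * μ) * (μ ^ k * r)
              + (‖B₂‖ * Cc - (1 - μ) * S₂) * M := by ring
          _ = μ ^ (k + 1) * r + Q * (((k : ℝ) + 1) * μ ^ (k + 1)) * r + S₂ * M := by
              rw [hQμ, hSeq]; ring
          _ = μ ^ (k + 1) * r + Q * (((k + 1 : ℕ) : ℝ) * μ ^ (k + 1)) * r + S₂ * M := by
              push_cast; ring
    -- final output bound
    have hdiff : y k - y' k
        = (σ₂ (C₂ (x₂ k) + D₂ (y₁ k)) - σ₂ (C₂ (x₂' k) + D₂ (y₁' k)))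
          + F₂ (y₁ k - y₁' k) := by
      rw [hy k, hy' k, map_sub]; abel
    have hlip : ‖σ₂ (C₂ (x₂ k) + D₂ (y₁ k)) - σ₂ (C₂ (x₂' k) + D₂ (y₁' k))‖
        ≤ l * ‖C₂ (x₂ k) + D₂ (y₁ k) - (C₂ (x₂' k) + D₂ (y₁' k))‖ := by
      have := hσ₂.dist_le_mul (C₂ (x₂ k) + D₂ (y₁ k)) (C₂ (x₂' k) + D₂ (y₁' k))
      rwa [dist_eq_norm, dist_eq_norm] at this
    have harg : C₂ (x₂ k) + D₂ (y₁ k) - (C₂ (x₂' k) + D₂ (y₁' k))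
        = C₂ (x₂ k - x₂' k) + D₂ (y₁ k - y₁' k) := by
      rw [map_sub, map_sub]; abel
    have hargle : ‖C₂ (x₂ k) + D₂ (y₁ k) - (C₂ (x₂' k) + D₂ (y₁' k))‖
        ≤ ‖C₂‖ * ‖x₂ k - x₂' k‖ + ‖D₂‖ * ‖y₁ k - y₁' k‖ := by
      rw [harg]
      exact (norm_add_le _ _).trans (add_le_add (C₂.le_opNorm _) (D₂.le_opNorm _))
    have h1 : ‖y k - y' k‖
        ≤ l * (‖C₂‖ * ‖x₂ k - x₂' k‖ + ‖D₂‖ * ‖y₁ k - y₁' k‖) + ‖F₂‖ * ‖y₁ k - y₁' k‖ := by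
      rw [hdiff]
      refine (norm_add_le _ _).trans (add_le_add (hlip.trans ?_) (F₂.le_opNorm _))
      exact mul_le_mul_of_nonneg_left hargle hl0
    have he2 := He2 k
    have hd1 := Hd1 k
    have hlc2 : 0 ≤ l * ‖C₂‖ := mul_nonneg hl0 (norm_nonneg _)
    have hDF : 0 ≤ l * ‖D₂‖ + ‖F₂‖ := by positivity
    have hmul1 := mul_le_mul_of_nonneg_left he2 hlc2
    have hmul2 := mul_le_mul_of_nonneg_left hd1 hDF
    have h2 : ‖y k - y' k‖
        ≤ (l * ‖C₂‖ * (1 + Q * (k : ℝ)) + (l * ‖D₂‖ + ‖F₂‖) * A') * (μ ^ k * r) + c * M := by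
      calc ‖y k - y' k‖
          ≤ l * (‖C₂‖ * ‖x₂ k - x₂' k‖ + ‖D₂‖ * ‖y₁ k - y₁' k‖)
            + ‖F₂‖ * ‖y₁ k - y₁' k‖ := h1
        _ = l * ‖C₂‖ * ‖x₂ k - x₂' k‖ + (l * ‖D₂‖ + ‖F₂‖) * ‖y₁ k - y₁' k‖ := by ring
        _ ≤ l * ‖C₂‖ * (μ ^ k * r + Q * ((k : ℝ) * μ ^ k) * r + S₂ * M)
            + (l * ‖D₂‖ + ‖F₂‖) * (A' * (μ ^ k * r) + Cc * M) := by linarith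
        _ = (l * ‖C₂‖ * (1 + Q * (k : ℝ)) + (l * ‖D₂‖ + ‖F₂‖) * A') * (μ ^ k * r)
            + c * M := by rw [hcdef]; ring
    refine h2.trans ?_
    have hpow : 0 ≤ μ ^ k * r := mul_nonneg (pow_nonneg hμ0.le k) hr0
    have hscal : l * ‖C₂‖ * (1 + Q * (k : ℝ)) + (l * ‖D₂‖ + ‖F₂‖) * A'
        ≤ K * ((k : ℝ) + 1) := by
      have hk0 : (0:ℝ) ≤ (k : ℝ) := Nat.cast_nonneg k
      have hexp : K * ((k : ℝ) + 1)
          = (l * ‖C₂‖ * (1 + Q * (k : ℝ)) + (l * ‖D₂‖ + ‖F₂‖) * A')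
            + (l * ‖C₂‖ * (k : ℝ) + l * ‖C₂‖ * Q + (l * ‖D₂‖ + ‖F₂‖) * A' * (k : ℝ)) := by
        rw [hKdef]; ring
      have e1 : 0 ≤ l * ‖C₂‖ * (k : ℝ) := mul_nonneg hlc2 hk0
      have e2 : 0 ≤ l * ‖C₂‖ * Q := mul_nonneg hlc2 hQ0
      have e3 : 0 ≤ (l * ‖D₂‖ + ‖F₂‖) * A' * (k : ℝ) :=
        mul_nonneg (mul_nonneg hDF hA'0) hk0
      linarith
    calc (l * ‖C₂‖ * (1 + Q * (k : ℝ)) + (l * ‖D₂‖ + ‖F₂‖) * A') * (μ ^ k * r) + c * M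
        ≤ K * ((k : ℝ) + 1) * (μ ^ k * r) + c * M := by
          have := mul_le_mul_of_nonneg_right hscal hpow
          linarith
      _ = K * ((k : ℝ) + 1) * μ ^ k * r + c * M := by ring
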